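/- arXiv:1610.04344 — 2 statements merged into one kernel-verified Lean document; each statement's English description precedes it below -/
import Mathlib

section
/- Define φ(x) = Σ_{n=1}^∞ (-1)^{n+1} exp(-π n² x) and ϕ(x) = φ(x) - φ(x/4) for x > 0. Then ϕ(1/x) = ϕ(x) √x for all x > 0. -/
noncomputable def phi (x : ℝ) : ℝ :=
  ∑' n : ℕ, (-1 : ℝ) ^ ((n + 1) + 1) * Real.exp (-Real.pi * ((n : ℝ) + 1) ^ 2 * x)

noncomputable def phiA (x : ℝ) : ℝ := phi x - phi (x / 4)

/-! With `θ(x) = ∑_{n ∈ ℤ} exp (-π n² x)`, splitting the alternating series `φ` into even and odd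
terms gives `2 φ(x) = 1 + θ(x) - 2 θ(4x)`, hence `2 ϕ(x) = 3 θ(x) - θ(x/4) - 2 θ(4x)`. By the Jacobi
transformation `θ(1/x) = √x θ(x)`, the terms `θ(1/(4x))` and `θ(4/x)` of `2 ϕ(1/x)` become
`2√x θ(4x)` and `(√x/2) θ(x/4)`: the coefficients `1` and `2` trade places. -/

open Real

noncomputable def theta (x : ℝ) : ℝ := ∑' n : ℤ, exp (-π * x * n ^ 2)

lemma summable_exp_neg_pi_mul_int_sq {x : ℝ} (hx : 0 < x) :
    Summable fun n : ℤ ↦ exp (-π * x * n ^ 2) := by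
  simpa [mul_assoc] using summable_pow_mul_jacobiTheta₂_term_bound 0 hx 0

lemma summable_exp_neg_pi_mul_nat_sq {x : ℝ} (hx : 0 < x) :
    Summable fun n : ℕ ↦ exp (-π * x * n ^ 2) := by
  simpa [Function.comp_def] using
    (summable_exp_neg_pi_mul_int_sq hx).comp_injective Nat.cast_injective

lemma theta_one_div {x : ℝ} (hx : 0 < x) : theta (1 / x) = √x * theta x := by
  have h := Real.tsum_exp_neg_mul_int_sq hx
  simp only [div_eq_mul_one_div (-π) x, ← sqrt_eq_rpow] at h
  change theta x = 1 / √x * theta (1 / x) at h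
  have hs : √x ≠ 0 := (sqrt_pos.2 hx).ne'
  rw [h]
  field_simp

lemma tsum_int_eq_two_mul_tsum_nat_sub {f : ℤ → ℝ} (hf : f.Even) (hs : Summable f) :
    ∑' n, f n = 2 * ∑' n : ℕ, f n - f 0 := by
  have := tsum_nat_add_neg hs
  simp only [hf _, ← two_mul, tsum_mul_left] at this
  linarith

lemma theta_eq_two_mul_tsum_nat_sub_one {x : ℝ} (hx : 0 < x) :
    theta x = 2 * ∑' n : ℕ, exp (-π * x * n ^ 2) - 1 := by
  rw [theta, tsum_int_eq_two_mul_tsum_nat_sub (fun n ↦ by simp) (summable_exp_neg_pi_mul_int_sq hx)]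
  simp

lemma tsum_neg_one_pow_mul {a : ℕ → ℝ} (ha : Summable a) :
    ∑' n, (-1) ^ n * a n = 2 * ∑' n, a (2 * n) - ∑' n, a n := by
  have he : Summable fun n ↦ a (2 * n) :=
    ha.comp_injective (mul_right_injective₀ two_ne_zero)
  have ho : Summable fun n ↦ a (2 * n + 1) :=
    ha.comp_injective (fun m n h ↦ by simpa using h : Function.Injective (2 * · + 1))
  rw [← tsum_even_add_odd he ho, ← tsum_even_add_odd (f := fun n ↦ (-1) ^ n * a n)
    (by simpa [pow_mul]) (by simpa [pow_succ, pow_mul] using ho.neg)]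
  simp only [pow_succ _ (2 * _), pow_mul, neg_one_sq, one_pow, one_mul, mul_neg_one, neg_mul,
    tsum_neg]
  ring

lemma phi_eq_one_sub_tsum {x : ℝ} (hx : 0 < x) :
    phi x = 1 - ∑' n : ℕ, (-1) ^ n * exp (-π * x * n ^ 2) := by
  have hs : Summable fun n : ℕ ↦ (-1) ^ n * exp (-π * x * n ^ 2) :=
    (summable_exp_neg_pi_mul_nat_sq hx).of_norm_bounded fun n ↦ by simp
  rw [hs.tsum_eq_zero_add, phi, ← sub_sub]
  norm_num [← tsum_neg]
  exact tsum_congr fun n ↦ by ring_nf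

lemma two_mul_phi {x : ℝ} (hx : 0 < x) : 2 * phi x = 1 + theta x - 2 * theta (4 * x) := by
  have h_even : ∑' n : ℕ, exp (-π * x * ((2 * n : ℕ) : ℝ) ^ 2) =
      ∑' n : ℕ, exp (-π * (4 * x) * n ^ 2) :=
    tsum_congr fun n ↦ by push_cast; ring_nf
  rw [phi_eq_one_sub_tsum hx, tsum_neg_one_pow_mul (summable_exp_neg_pi_mul_nat_sq hx), h_even,
    theta_eq_two_mul_tsum_nat_sub_one hx, theta_eq_two_mul_tsum_nat_sub_one (by positivity)]
  ring

lemma two_mul_phiA {x : ℝ} (hx : 0 < x) :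
    2 * phiA x = 3 * theta x - theta (x / 4) - 2 * theta (4 * x) := by
  have h := two_mul_phi (x := x / 4) (by positivity)
  rw [mul_div_cancel₀ x four_ne_zero] at h
  rw [phiA, mul_sub, two_mul_phi hx, h]
  ring

/-- The functional equation `ϕ(1/x) = ϕ(x)√x` for `ϕ(x) = φ(x) - φ(x/4)`. -/
theorem phiA_functional_equation (x : ℝ) (hx : 0 < x) :
    phiA (1 / x) = phiA x * Real.sqrt x := by
  have h := two_mul_phiA (one_div_pos.2 hx)
  rw [show 1 / x / 4 = 1 / (4 * x) by ring, show 4 * (1 / x) = 1 / (x / 4) by ring,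
    theta_one_div hx, theta_one_div (by positivity), theta_one_div (by positivity),
    sqrt_div' x zero_le_four, sqrt_mul zero_le_four, show √(4 : ℝ) = 2 by norm_num] at h
  linear_combination (h - √x * two_mul_phiA hx) / 2
end

section
/- For all x ≥ 1 and every nonnegative integer m, the quantity T_m(x) = -exp(-πx(4m+1)²/4) + 2 exp(-πx(4m+2)²/4) - exp(-πx(4m+3)²/4) is strictly negative. -/
/-!
Consecutive terms of the Gaussian sum are far apart: the exponents of the first two terms differ
by `πx(8m+3)/4 ≥ 3π/4 > log 2`, so the first term alone outweighs twice the second.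
-/

open Real

lemma two_mul_exp_lt_exp {a b : ℝ} (h : log 2 < a - b) : 2 * exp b < exp a := by
  calc 2 * exp b = exp (log 2 + b) := by rw [exp_add, exp_log two_pos]
    _ < exp a := exp_lt_exp.mpr (by linarith)

lemma log_two_lt_gaussian_exponent_gap {x : ℝ} (hx : 1 ≤ x) {t : ℝ} (ht : 0 ≤ t) :
    log 2 < -π * x * (4 * t + 1) ^ 2 / 4 - -π * x * (4 * t + 2) ^ 2 / 4 := by
  have hgap : -π * x * (4 * t + 1) ^ 2 / 4 - -π * x * (4 * t + 2) ^ 2 / 4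
      = π * x * (8 * t + 3) / 4 := by ring
  have hπx : 3 ≤ π * x := by nlinarith [pi_gt_three]
  have hlog : log 2 < 1 := by linarith [log_two_lt_d9]
  rw [hgap]
  nlinarith

/-- For `x ≥ 1` and `m ≥ 0`, the term
`T_m(x) = -exp(-πx(4m+1)²/4) + 2 exp(-πx(4m+2)²/4) - exp(-πx(4m+3)²/4)`
is strictly negative. -/
theorem T_m_neg (x : ℝ) (hx : 1 ≤ x) (m : ℕ) :
    -Real.exp (-Real.pi * x * (4 * (m : ℝ) + 1) ^ 2 / 4)
      + 2 * Real.exp (-Real.pi * x * (4 * (m : ℝ) + 2) ^ 2 / 4)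
      - Real.exp (-Real.pi * x * (4 * (m : ℝ) + 3) ^ 2 / 4) < 0 := by
  have hdominant := two_mul_exp_lt_exp (log_two_lt_gaussian_exponent_gap hx m.cast_nonneg)
  linarith [exp_pos (-π * x * (4 * (m : ℝ) + 3) ^ 2 / 4)]
end
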